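/- A nonempty finite word w over a totally ordered alphabet is a Lyndon word if and only if for every factorization w = uv with u and v both nonempty, one has u^ω < v^ω in the lexicographic order on infinite words. -/
import Mathlib


variable {A : Type*} [LinearOrder A] [Inhabited A]

/-- The infinite periodic word `u^ω = uuu⋯`, as a function `ℕ → A`. -/
def omegaPow (u : List A) : ℕ → A := fun n => u.getD (n % u.length) default

/-- Lexicographic order on infinite words: `s < t` iff at the first position where
they differ, `s` has the smaller letter. -/
def lexLt (s t : ℕ → A) : Prop := ∃ k, (∀ i < k, s i = t i) ∧ s k < t k

/-- A nonempty word `w` is a Lyndon word: `w` is lexicographically smaller than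
each of its nonempty proper suffixes. -/
def IsLyndon (w : List A) : Prop :=
  w ≠ [] ∧ ∀ v, v <:+ w → v ≠ [] → v ≠ w → List.Lex (· < ·) w v

/-- Positional characterization of the lexicographic order on finite words. -/
lemma lex_iff : ∀ (l₁ l₂ : List A),
    List.Lex (· < ·) l₁ l₂ ↔
      ((∃ k, k < l₁.length ∧ k < l₂.length ∧
        (∀ i < k, l₁.getD i default = l₂.getD i default) ∧
        l₁.getD k default < l₂.getD k default) ∨
       (l₁.length < l₂.length ∧
        ∀ i < l₁.length, l₁.getD i default = l₂.getD i default))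
  | [], [] => by
      constructor
      · intro h; cases h
      · rintro (⟨k, hk, -⟩ | ⟨h, -⟩)
        · simp at hk
        · simp at h
  | [], b :: t₂ => by
      constructor
      · intro _; right; simp
      · intro _; exact List.Lex.nil
  | a :: t₁, [] => by
      constructor
      · intro h; cases h
      · rintro (⟨k, -, hk, -⟩ | ⟨h, -⟩)
        · simp at hk
        · simp at h
  | a :: t₁, b :: t₂ => by
      constructor
      · intro h
        cases h with
        | @rel _ _ _ _ h' =>
            left
            exact ⟨0, by simp, by simp, by intro i hi; omega, by simpa using h'⟩
        | @cons _ _ _ h' =>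
            rcases (lex_iff t₁ t₂).1 h' with ⟨k, h1, h2, h3, h4⟩ | ⟨h1, h2⟩
            · left
              refine ⟨k + 1, by simpa using h1, by simpa using h2, ?_, by simpa using h4⟩
              intro i hi
              cases i with
              | zero => simp
              | succ j => simpa using h3 j (by omega)
            · right
              refine ⟨by simpa using h1, ?_⟩
              intro i hi
              cases i with
              | zero => simp
              | succ j => simpa using h2 j (by simpa using hi)
      · rintro (⟨k, h1, h2, h3, h4⟩ | ⟨h1, h2⟩)
        · cases k with
          | zero => exact List.Lex.rel (by simpa using h4)
          | succ j =>
              have hab : a = b := by simpa using h3 0 (by omega)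
              subst hab
              refine List.Lex.cons ((lex_iff t₁ t₂).2 (Or.inl ⟨j, by simpa using h1,
                by simpa using h2, ?_, by simpa using h4⟩))
              intro i hi
              simpa using h3 (i + 1) (by omega)
        · have hab : a = b := by simpa using h2 0 (by simp)
          subst hab
          refine List.Lex.cons ((lex_iff t₁ t₂).2 (Or.inr ⟨by simpa using h1, ?_⟩))
          intro i hi
          simpa using h2 (i + 1) (by simpa using hi)

/-- Asymmetry of lexicographic order on words of equal length. -/
lemma lex_asymm {l₁ l₂ : List A} (hlen : l₁.length = l₂.length)
    (h₁ : List.Lex (· < ·) l₁ l₂) (h₂ : List.Lex (· < ·) l₂ l₁) : False := by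
  rw [lex_iff] at h₁ h₂
  rcases h₁ with ⟨k₁, hk₁a, hk₁b, hag₁, hlt₁⟩ | ⟨h, _⟩
  · rcases h₂ with ⟨k₂, hk₂a, hk₂b, hag₂, hlt₂⟩ | ⟨h, _⟩
    · rcases lt_trichotomy k₁ k₂ with h | h | h
      · rw [hag₂ k₁ h] at hlt₁; exact lt_irrefl _ hlt₁
      · subst h; exact lt_asymm hlt₁ hlt₂
      · rw [hag₁ k₂ h] at hlt₂; exact lt_irrefl _ hlt₂
    · omega
  · omega

lemma omegaPow_eq_getD (x : List A) {i : ℕ} (h : i < x.length) :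
    omegaPow x i = x.getD i default := by
  simp [omegaPow, Nat.mod_eq_of_lt h]

lemma omegaPow_sub (x : List A) {m : ℕ} (h : x.length ≤ m) :
    omegaPow x m = omegaPow x (m - x.length) := by
  simp only [omegaPow]
  rw [Nat.mod_eq_sub_mod h]

/-- Key computation: if `x^ω` and `y^ω` agree below `m < |x|+|y|`, then the `m`-th
letter of `x ++ y` is the `m`-th letter of `x^ω`. -/
lemma key (x y : List A) (hx : x ≠ []) (m : ℕ) (hm : m < x.length + y.length)
    (H : ∀ i < m, omegaPow x i = omegaPow y i) :
    (x ++ y).getD m default = omegaPow x m := by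
  have hx0 : 0 < x.length := List.length_pos_iff.2 hx
  by_cases h : m < x.length
  · rw [List.getD_append _ _ _ _ h, omegaPow_eq_getD x h]
  · push_neg at h
    have h1 : m - x.length < y.length := by omega
    rw [List.getD_append_right _ _ _ _ h, ← omegaPow_eq_getD y h1,
      ← H _ (by omega)]
    exact (omegaPow_sub x h).symm

/-- If `x^ω` and `y^ω` agree below `|x|+|y|`, they agree everywhere. -/
lemma omega_ext (x y : List A) (hx : x ≠ []) (hy : y ≠ [])
    (H : ∀ i < x.length + y.length, omegaPow x i = omegaPow y i) :
    ∀ n, omegaPow x n = omegaPow y n := by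
  intro n
  induction n using Nat.strong_induction_on with
  | _ n ih =>
    by_cases h : n < x.length + y.length
    · exact H n h
    · push_neg at h
      have hx0 : 0 < x.length := List.length_pos_iff.2 hx
      have hy0 : 0 < y.length := List.length_pos_iff.2 hy
      have e1 : omegaPow x n = omegaPow y (n - x.length) := by
        rw [omegaPow_sub x (by omega)]
        exact ih _ (by omega)
      have e2 : omegaPow y n = omegaPow y (n - y.length - x.length) := by
        rw [omegaPow_sub y (by omega), ← ih (n - y.length) (by omega),
          omegaPow_sub x (by omega)]
        exact ih _ (by omega)
      have e3 : omegaPow y (n - x.length) = omegaPow y (n - x.length - y.length) :=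
        omegaPow_sub y (by omega)
      rw [e1, e2, e3]
      congr 1
      omega

/-- Main bridge: `x^ω < y^ω` iff `x ++ y` is lexicographically smaller
than `y ++ x`. -/
lemma omegaPow_lt_iff_lex (x y : List A) (hx : x ≠ []) (hy : y ≠ []) :
    lexLt (omegaPow x) (omegaPow y) ↔ List.Lex (· < ·) (x ++ y) (y ++ x) := by
  have hx0 : 0 < x.length := List.length_pos_iff.2 hx
  have hy0 : 0 < y.length := List.length_pos_iff.2 hy
  constructor
  · rintro ⟨k, hag, hlt⟩
    have hkN : k < x.length + y.length := by
      by_contra hk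
      push_neg at hk
      have := omega_ext x y hx hy (fun i hi => hag i (lt_of_lt_of_le hi hk)) k
      rw [this] at hlt
      exact lt_irrefl _ hlt
    rw [lex_iff]
    left
    refine ⟨k, by simpa using hkN, by simp; omega, ?_, ?_⟩
    · intro i hi
      rw [key x y hx i (by omega) (fun j hj => hag j (hj.trans hi)),
        key y x hy i (by omega) (fun j hj => (hag j (hj.trans hi)).symm)]
      exact hag i hi
    · rw [key x y hx k hkN hag, key y x hy k (by omega) (fun j hj => (hag j hj).symm)]
      exact hlt
  · intro h
    rw [lex_iff] at h
    rcases h with ⟨k, hk1, hk2, hag, hlt⟩ | ⟨hl, _⟩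
    · have hkN : k < x.length + y.length := by simpa using hk1
      have hex : ∃ i, i ≤ k ∧ omegaPow x i ≠ omegaPow y i := by
        by_contra hc
        push_neg at hc
        rw [key x y hx k hkN (fun i hi => hc i (le_of_lt hi)),
          key y x hy k (by omega) (fun i hi => (hc i (le_of_lt hi)).symm),
          hc k le_rfl] at hlt
        exact lt_irrefl _ hlt
      classical
      set m := Nat.find hex with hm_def
      have hmk : m ≤ k := (Nat.find_spec hex).1
      have hm_ne : omegaPow x m ≠ omegaPow y m := (Nat.find_spec hex).2
      have hm_min : ∀ i < m, omegaPow x i = omegaPow y i := by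
        intro i hi
        have := Nat.find_min hex hi
        push_neg at this
        exact this (by omega)
      have e1 := key x y hx m (by omega) hm_min
      have e2 := key y x hy m (by omega) (fun i hi => (hm_min i hi).symm)
      have hmk' : m = k := by
        rcases lt_or_eq_of_le hmk with hlt' | h'
        · exact absurd (by rw [← e1, ← e2]; exact hag m hlt') hm_ne
        · exact h'
      refine ⟨m, hm_min, ?_⟩
      rw [← e1, ← e2, hmk']
      exact hlt
    · simp at hl
      omega

/-- A nonempty word `w` is a Lyndon word iff for every nontrivial factorization
`w = uv` one has `u^ω < v^ω`. -/
theorem isLyndon_iff_omegaPow_lt (w : List A) (hw : w ≠ []) :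
    IsLyndon w ↔
      ∀ u v : List A, w = u ++ v → u ≠ [] → v ≠ [] →
        lexLt (omegaPow u) (omegaPow v) := by
  constructor
  · rintro ⟨-, hly⟩ u v heq hu hv
    have hu0 : 0 < u.length := List.length_pos_iff.2 hu
    have hv0 : 0 < v.length := List.length_pos_iff.2 hv
    have hwlen : w.length = u.length + v.length := by rw [heq]; simp
    rw [omegaPow_lt_iff_lex u v hu hv]
    have hvw : v ≠ w := by
      intro hvw
      rw [← hvw] at hwlen
      omega
    have hL := hly v ⟨u, heq.symm⟩ hv hvw
    rw [lex_iff] at hL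
    rcases hL with ⟨k, hk1, hk2, hag, hlt⟩ | ⟨hlen, _⟩
    · rw [lex_iff]
      left
      refine ⟨k, by simpa [← heq] using hk1, by simp; omega, ?_, ?_⟩
      · intro i hi
        rw [← heq, List.getD_append _ _ _ _ (hi.trans hk2)]
        exact hag i hi
      · rw [← heq, List.getD_append _ _ _ _ hk2]
        exact hlt
    · omega
  · intro h
    refine ⟨hw, ?_⟩
    intro v hsuf hv hvw
    obtain ⟨u, hu_eq⟩ := hsuf
    have heq : w = u ++ v := hu_eq.symm
    subst heq
    have hu : u ≠ [] := by rintro rfl; exact hvw (by simp)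
    have hu0 : 0 < u.length := List.length_pos_iff.2 hu
    have hv0 : 0 < v.length := List.length_pos_iff.2 hv
    have h1 := h u v rfl hu hv
    rw [omegaPow_lt_iff_lex u v hu hv, lex_iff] at h1
    rcases h1 with ⟨k, hk1, hk2, hag, hlt⟩ | ⟨hl, _⟩
    · by_cases hkv : k < v.length
      · rw [lex_iff]
        left
        refine ⟨k, hk1, hkv, ?_, ?_⟩
        · intro i hi
          have := hag i hi
          rwa [List.getD_append _ _ _ _ (hi.trans hkv)] at this
        · have := hlt
          rwa [List.getD_append _ _ _ _ hkv] at this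
      · exfalso
        push_neg at hkv
        have hpre : ∀ i < v.length, (u ++ v).getD i default = v.getD i default := by
          intro i hi
          have := hag i (lt_of_lt_of_le hi hkv)
          rwa [List.getD_append _ _ _ _ hi] at this
        have hvlen : v.length ≤ (u ++ v).length := by simp
        have htake : (u ++ v).take v.length = v := by
          apply List.ext_getElem
          · simp
          · intro i h1 h2
            have hiv : i < v.length := by simpa using h2
            have := hpre i hiv
            rw [List.getD_eq_getElem _ _ (by simp; omega),
              List.getD_eq_getElem _ _ hiv] at this
            rw [List.getElem_take]
            exact this
        set s := (u ++ v).drop v.length with hs_def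
        have hws : u ++ v = v ++ s := by
          conv_lhs => rw [← List.take_append_drop v.length (u ++ v)]
          rw [htake]
        have hslen : s.length = u.length := by simp [hs_def]
        have hs_ne : s ≠ [] := by
          intro hc
          rw [hc] at hslen
          simp at hslen
          omega
        have h2 := h v s hws hv hs_ne
        rw [omegaPow_lt_iff_lex v s hv hs_ne] at h2
        rw [← hws] at h2
        -- h2 : Lex (u ++ v) (s ++ v); derive Lex (s ++ v) (u ++ v) and contradict
        have hkN : k < u.length + v.length := by simpa using hk1
        have hj0 : k - v.length < u.length := by omega
        have hj0s : k - v.length < s.length := by omega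
        have hsagree : ∀ j < k - v.length, s.getD j default = u.getD j default := by
          intro j hj
          have hik : j + v.length < k := by omega
          have := hag (j + v.length) hik
          rw [hws, List.getD_append_right _ _ _ _ (by omega),
            List.getD_append_right _ _ _ _ (by omega)] at this
          simpa using this
        have hsstrict : s.getD (k - v.length) default < u.getD (k - v.length) default := by
          have := hlt
          rw [hws, List.getD_append_right _ _ _ _ (by omega),
            List.getD_append_right _ _ _ _ (by omega)] at this
          simpa using this
        have h3 : List.Lex (· < ·) (s ++ v) (u ++ v) := by
          rw [lex_iff]
          left
          refine ⟨k - v.length, by simp; omega, by simp; omega, ?_, ?_⟩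
          · intro i hi
            rw [List.getD_append _ _ _ _ (by omega), List.getD_append _ _ _ _ (by omega)]
            exact hsagree i hi
          · rw [List.getD_append _ _ _ _ (by omega), List.getD_append _ _ _ _ (by omega)]
            exact hsstrict
        exact lex_asymm (by simp; omega) h2 h3
    · simp at hl
      omega
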